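/- arXiv:1107.4284 — 8 statements merged into one kernel-verified Lean document; each statement's English description precedes it below -/
import Mathlib

section
/- Let X be an algebraic toric set in P^{s-1} parameterized by the monomials arising from the edges of a clutter, and let δ_d denote the minimum distance of the parameterized linear code C_X(d). Then δ_d = 1 for every degree d with d ≥ reg(S/I(X)), the index of regularity of S/I(X). -/
noncomputable section

open scoped BigOperators

/-- The vanishing ideal `I(Y)` of a set `Y` of points in projective space: the ideal
generated by the homogeneous polynomials vanishing at every point of `Y`. -/
def vanishingIdeal (K : Type*) [Field K] {s : ℕ}
    (Y : Set (Projectivization K (Fin s → K))) : Ideal (MvPolynomial (Fin s) K) :=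
  Ideal.span {f | (∃ d, f.IsHomogeneous d) ∧ ∀ P ∈ Y, MvPolynomial.eval P.rep f = 0}

/-- The Hilbert function `d ↦ dim_K (S/I)_d` of the standard graded quotient `S/I`. -/
def hilbertFunction {K : Type*} [Field K] {s : ℕ}
    (I : Ideal (MvPolynomial (Fin s) K)) (d : ℕ) : ℕ :=
  Module.finrank K ((MvPolynomial.homogeneousSubmodule (Fin s) K d).map
    (Ideal.Quotient.mkₐ K I).toLinearMap)

/-- The index of regularity of `S/I(Y)`: the least `p ≥ 0` such that
`H_Y(d) = |Y|` for all `d ≥ p`. -/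
def regIndex {K : Type*} [Field K] {s : ℕ}
    (Y : Set (Projectivization K (Fin s → K))) : ℕ :=
  sInf {p : ℕ | ∀ d, p ≤ d → hilbertFunction (vanishingIdeal K Y) d = Y.ncard}

/-- The algebraic toric set in `P^{s-1}` parameterized by the monomials `y^{v_1},…,y^{v_s}`. -/
def toricSet (K : Type*) [Field K] {n s : ℕ} (v : Fin s → Fin n → ℕ) :
    Set (Projectivization K (Fin s → K)) :=
  {P | ∃ x : Fin n → K, (∀ j, x j ≠ 0) ∧
      ∃ h : (fun i : Fin s => ∏ j, x j ^ v i j) ≠ 0,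
        P = Projectivization.mk K (fun i : Fin s => ∏ j, x j ^ v i j) h}

/-- The projective torus in `P^{s-1}`: the points all of whose coordinates are nonzero. -/
def projTorus (K : Type*) [Field K] (s : ℕ) : Set (Projectivization K (Fin s → K)) :=
  {P | ∀ i, P.rep i ≠ 0}

/-- The parameterized (evaluation) code `C_Y(d)`: the image of the degree-`d` evaluation map
`f ↦ (f(P)/t_1^d(P))_{P ∈ Y}`. -/
def evalCode (K : Type*) [Field K] {s : ℕ} [NeZero s]
    (Y : Set (Projectivization K (Fin s → K))) (d : ℕ) : Set (Y → K) :=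
  {w | ∃ f ∈ MvPolynomial.homogeneousSubmodule (Fin s) K d,
      w = fun P : Y => MvPolynomial.eval (P : Projectivization K (Fin s → K)).rep f /
        ((P : Projectivization K (Fin s → K)).rep 0) ^ d}

/-- The minimum distance of a code: the least number of nonzero entries of a
nonzero codeword. -/
def minDist {K : Type*} [Field K] {ι : Type*} (C : Set (ι → K)) : ℕ :=
  sInf {m | ∃ w ∈ C, w ≠ 0 ∧ m = {i | w i ≠ 0}.ncard}

/-- `v 1,…,v s` are the characteristic vectors of the edges of a clutter: all the entries
are in `{0,1}` and no edge (support) is contained in another. -/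
def IsClutter {n s : ℕ} (v : Fin s → Fin n → ℕ) : Prop :=
  (∀ i j, v i j ≤ 1) ∧ ∀ i k : Fin s, i ≠ k → ∃ j, v i j ≠ 0 ∧ v k j = 0

/-- An ideal of `K[t_1,…,t_s]` is a complete intersection if it can be generated by `s-1`
homogeneous polynomials. -/
def IsCompleteIntersection {K : Type*} [Field K] {s : ℕ}
    (I : Ideal (MvPolynomial (Fin s) K)) : Prop :=
  ∃ g : Fin (s - 1) → MvPolynomial (Fin s) K,
    (∀ i, ∃ d, (g i).IsHomogeneous d) ∧ Ideal.span (Set.range g) = I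

end

/-!
The points of `X` have all coordinates nonzero, and `X` is finite. Any two distinct projective
points are separated by a linear form (a `2 × 2` minor), so for `d ≥ |X| - 1` a product of such
forms, padded by a power of a variable, is a degree-`d` form vanishing on all of `X` but one
point. Hence `ev_d` is onto `K^X` for large `d`, and the set defining `reg(S/I(X))` is nonempty.
Since the kernel of `ev_d` is `I(X)_d`, `H_X(d)` is the rank of `ev_d`, so `H_X(d) = |X|` means
that `ev_d` is onto; for `d ≥ reg(S/I(X))` the unit vectors of `K^X` are then codewords of
weight one.
-/

open MvPolynomial (eval C X isHomogeneous_C isHomogeneous_X homogeneousSubmodule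
  mem_homogeneousSubmodule)
open Projectivization
open scoped LinearAlgebra.Projectivization

section Separation

variable {K σ : Type*} [Field K]

lemma exists_isHomogeneous_one_separating {P Q : ℙ K (σ → K)} (hPQ : P ≠ Q) :
    ∃ L : MvPolynomial σ K, L.IsHomogeneous 1 ∧ eval Q.rep L = 0 ∧ eval P.rep L ≠ 0 := by
  obtain ⟨j, hj⟩ := Function.ne_iff.mp Q.rep_nonzero
  by_contra! h
  -- The 2 × 2 minors `Q_j X_i - Q_i X_j` vanish at `Q`, so at `P` as well: `P` is a multiple of `Q`.
  have hminor : ∀ i, Q.rep j * P.rep i = Q.rep i * P.rep j := fun i => by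
    have := h (C (Q.rep j) * X i - C (Q.rep i) * X j)
      (((isHomogeneous_C _ _).mul (isHomogeneous_X K i)).sub
        ((isHomogeneous_C _ _).mul (isHomogeneous_X K j))) (by simp [mul_comm])
    simpa [sub_eq_zero] using this
  apply hPQ
  rw [← mk_rep P, ← mk_rep Q, mk_eq_mk_iff']
  refine ⟨P.rep j / Q.rep j, funext fun i => ?_⟩
  simp only [Pi.smul_apply, smul_eq_mul]
  rw [div_mul_eq_mul_div, div_eq_iff hj]
  linear_combination -hminor i

lemma exists_isHomogeneous_separating (P : ℙ K (σ → K)) (T : Finset (ℙ K (σ → K)))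
    (hP : P ∉ T) {d : ℕ} (hd : T.card ≤ d) :
    ∃ f : MvPolynomial σ K, f.IsHomogeneous d ∧ eval P.rep f ≠ 0 ∧ ∀ Q ∈ T, eval Q.rep f = 0 := by
  classical
  induction T using Finset.induction_on generalizing d with
  | empty =>
    obtain ⟨k, hk⟩ := Function.ne_iff.mp P.rep_nonzero
    exact ⟨X k ^ d, by simpa using (isHomogeneous_X K k).pow d, by simpa using pow_ne_zero d hk,
      by simp⟩
  | insert Q T hQT ih =>
    rw [Finset.mem_insert, not_or] at hP
    rw [Finset.card_insert_of_notMem hQT] at hd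
    obtain ⟨e, rfl⟩ : ∃ e, d = e + 1 := ⟨d - 1, by omega⟩
    obtain ⟨f, hf, hfP, hfT⟩ := ih hP.2 (d := e) (by omega)
    obtain ⟨L, hL, hLQ, hLP⟩ := exists_isHomogeneous_one_separating hP.1
    refine ⟨f * L, hf.mul hL, by simpa using mul_ne_zero hfP hLP, ?_⟩
    rintro R hR
    rcases Finset.mem_insert.mp hR with rfl | hR
    · simp [hLQ]
    · simp [hfT R hR]

end Separation

section EvalMap

variable {K : Type*} [Field K] {s : ℕ} {Y : Set (ℙ K (Fin s → K))} {d : ℕ}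

lemma mem_vanishingIdeal_iff_of_isHomogeneous {f : MvPolynomial (Fin s) K}
    (hf : f.IsHomogeneous d) : f ∈ vanishingIdeal K Y ↔ ∀ P ∈ Y, eval P.rep f = 0 := by
  refine ⟨fun hfI P hP => ?_, fun h => Ideal.subset_span ⟨⟨d, hf⟩, h⟩⟩
  have : vanishingIdeal K Y ≤ RingHom.ker (eval P.rep) :=
    Ideal.span_le.mpr fun g hg => RingHom.mem_ker.mpr (hg.2 P hP)
  exact this hfI

variable [NeZero s]

variable (Y d) in
noncomputable def evalMap : homogeneousSubmodule (Fin s) K d →ₗ[K] (Y → K) where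
  toFun f P := eval (P : ℙ K (Fin s → K)).rep f / (P : ℙ K (Fin s → K)).rep 0 ^ d
  map_add' f g := by funext P; simp [add_div]
  map_smul' a f := by funext P; simp [mul_div_assoc]

lemma evalCode_eq_range : evalCode K Y d = Set.range (evalMap Y d) := by
  ext w
  constructor
  · rintro ⟨f, hf, rfl⟩
    exact ⟨⟨f, hf⟩, rfl⟩
  · rintro ⟨⟨f, hf⟩, rfl⟩
    exact ⟨f, hf, rfl⟩

lemma evalMap_eq_zero_iff (hY : ∀ P ∈ Y, P.rep 0 ≠ 0) (f : homogeneousSubmodule (Fin s) K d) :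
    evalMap Y d f = 0 ↔ (f : MvPolynomial (Fin s) K) ∈ vanishingIdeal K Y := by
  rw [mem_vanishingIdeal_iff_of_isHomogeneous ((mem_homogeneousSubmodule _ _).mp f.2), funext_iff]
  simp [evalMap, hY]

lemma hilbertFunction_vanishingIdeal_eq_finrank_range (hY : ∀ P ∈ Y, P.rep 0 ≠ 0) :
    hilbertFunction (vanishingIdeal K Y) d = Module.finrank K (LinearMap.range (evalMap Y d)) := by
  set A := (Ideal.Quotient.mkₐ K (vanishingIdeal K Y)).toLinearMap ∘ₗ
    (homogeneousSubmodule (Fin s) K d).subtype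
  have hker : LinearMap.ker A = LinearMap.ker (evalMap Y d) := by
    ext f
    simp [A, evalMap_eq_zero_iff hY, Ideal.Quotient.eq_zero_iff_mem]
  have hmap : (homogeneousSubmodule (Fin s) K d).map
      (Ideal.Quotient.mkₐ K (vanishingIdeal K Y)).toLinearMap = LinearMap.range A := by
    rw [LinearMap.range_comp, Submodule.range_subtype]
  rw [hilbertFunction, hmap, ← (LinearMap.quotKerEquivRange A).finrank_eq, hker,
    (LinearMap.quotKerEquivRange _).finrank_eq]

lemma hilbertFunction_vanishingIdeal_eq_ncard_iff [Finite Y] (hY : ∀ P ∈ Y, P.rep 0 ≠ 0) :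
    hilbertFunction (vanishingIdeal K Y) d = Y.ncard ↔ Function.Surjective (evalMap Y d) := by
  have := Fintype.ofFinite Y
  rw [hilbertFunction_vanishingIdeal_eq_finrank_range hY, ← LinearMap.range_eq_top,
    ← Nat.card_coe_set_eq, Nat.card_eq_fintype_card, ← Module.finrank_fintype_fun_eq_card K]
  exact ⟨Submodule.eq_top_of_finrank_eq, fun h => by rw [h, finrank_top]⟩

lemma single_mem_range_evalMap [Finite Y] (hY : ∀ P ∈ Y, P.rep 0 ≠ 0) (hd : Y.ncard ≤ d + 1)
    [DecidableEq Y] (P : Y) (c : K) : Pi.single P c ∈ LinearMap.range (evalMap Y d) := by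
  set T := (Set.toFinite (Y \ {(P : ℙ K (Fin s → K))})).toFinset
  have hT : T.card ≤ d := by
    rw [← Set.ncard_eq_toFinset_card _ (Set.toFinite _), Set.ncard_sdiff_singleton_of_mem P.2]
    omega
  obtain ⟨f, hf, hfP, hfT⟩ := exists_isHomogeneous_separating P T (by simp [T]) hT
  refine ⟨(c * (P : ℙ K (Fin s → K)).rep 0 ^ d / eval (P : ℙ K (Fin s → K)).rep f) •
    ⟨f, (mem_homogeneousSubmodule _ _).mpr hf⟩, funext fun Q => ?_⟩
  by_cases hQP : Q = P
  · subst hQP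
    have hQ0 := hY Q Q.2
    simp only [evalMap, SetLike.mk_smul_mk, LinearMap.coe_mk, AddHom.coe_mk,
      MvPolynomial.smul_eval, Pi.single_eq_same]
    field_simp
  · have hQT : (Q : ℙ K (Fin s → K)) ∈ T := by
      simpa [T] using fun h => hQP (Subtype.ext h)
    simp [evalMap, hfT Q hQT, hQP]

lemma surjective_evalMap_of_ncard_le [Finite Y] (hY : ∀ P ∈ Y, P.rep 0 ≠ 0)
    (hd : Y.ncard ≤ d + 1) : Function.Surjective (evalMap Y d) := by
  classical
  have := Fintype.ofFinite Y
  rw [← LinearMap.range_eq_top, eq_top_iff]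
  intro w _
  rw [← Finset.univ_sum_single w]
  exact Submodule.sum_mem _ fun P _ => single_mem_range_evalMap hY hd P (w P)

lemma surjective_evalMap_of_regIndex_le [Finite Y] (hY : ∀ P ∈ Y, P.rep 0 ≠ 0)
    (hd : regIndex Y ≤ d) : Function.Surjective (evalMap Y d) := by
  have hstable : {p | ∀ d, p ≤ d → hilbertFunction (vanishingIdeal K Y) d = Y.ncard}.Nonempty :=
    ⟨Y.ncard, fun d hd => (hilbertFunction_vanishingIdeal_eq_ncard_iff hY).mpr
      (surjective_evalMap_of_ncard_le hY (by omega))⟩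
  exact (hilbertFunction_vanishingIdeal_eq_ncard_iff hY).mp (Nat.sInf_mem hstable d hd)

end EvalMap

lemma minDist_eq_one_of_single_mem {K ι : Type*} [Field K] [Finite ι] [DecidableEq ι]
    {C : Set (ι → K)} (i : ι) (h : Pi.single i 1 ∈ C) : minDist C = 1 := by
  refine le_antisymm (Nat.sInf_le ⟨_, h, by simp, ?_⟩) (le_csInf ⟨_, _, h, by simp, rfl⟩ ?_)
  · exact (Set.ncard_eq_one.mpr ⟨i, by ext j; simp [Pi.single_apply]⟩).symm
  · rintro m ⟨w, -, hw, rfl⟩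
    obtain ⟨j, hj⟩ := Function.ne_iff.mp hw
    exact (Set.ncard_pos (Set.toFinite _)).mpr ⟨j, hj⟩

section ToricSet

variable {K : Type*} [Field K] {n s : ℕ}

lemma toricSet_subset_projTorus (v : Fin s → Fin n → ℕ) : toricSet K v ⊆ projTorus K s := by
  rintro _ ⟨x, hx, h, rfl⟩ i
  obtain ⟨a, ha⟩ := exists_smul_eq_mk_rep K _ h
  rw [← ha]
  exact smul_ne_zero a.ne_zero (Finset.prod_ne_zero_iff.mpr fun j _ => pow_ne_zero _ (hx j))

lemma toricSet_nonempty [NeZero s] (v : Fin s → Fin n → ℕ) : (toricSet K v).Nonempty := by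
  have h : (fun i : Fin s => ∏ j, (1 : K) ^ v i j) ≠ 0 :=
    Function.ne_iff.mpr ⟨0, by simp⟩
  exact ⟨mk K _ h, fun _ => 1, fun _ => one_ne_zero, h, rfl⟩

end ToricSet

theorem stmt0_general {K : Type*} [Field K] [Fintype K] {n s : ℕ} [NeZero s]
    (v : Fin s → Fin n → ℕ)
    (d : ℕ) (hd : regIndex (toricSet K v) ≤ d) :
    minDist (evalCode K (toricSet K v) d) = 1 := by
  classical
  have hX : ∀ P ∈ toricSet K v, P.rep 0 ≠ 0 := fun P hP => toricSet_subset_projTorus v hP 0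
  obtain ⟨P, hP⟩ := toricSet_nonempty (K := K) v
  obtain ⟨f, hf⟩ := surjective_evalMap_of_regIndex_le hX hd (Pi.single ⟨P, hP⟩ 1)
  exact minDist_eq_one_of_single_mem ⟨P, hP⟩ (by rw [evalCode_eq_range]; exact ⟨f, hf⟩)

/-- For an algebraic toric set `X` parameterized by the monomials of the
edges of a clutter, the minimum distance of `C_X(d)` equals `1` for every
`d ≥ reg(S/I(X))`. -/
theorem stmt0 {K : Type*} [Field K] [Fintype K] {q n s : ℕ} [NeZero s]
    (hq : Fintype.card K = q) (hq3 : 3 ≤ q) (hs : 2 ≤ s)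
    (v : Fin s → Fin n → ℕ) (hv : IsClutter v)
    (d : ℕ) (hd : regIndex (toricSet K v) ≤ d) :
    minDist (evalCode K (toricSet K v) d) = 1 :=
  stmt0_general v d hd
end

section
/- Let T = {[(x_1,...,x_s)] ∈ P^{s-1} : x_i ∈ K* for all i} be a projective torus over the finite field K = F_q. Then the vanishing ideal of T is I(T) = (t_2^{q-1} - t_1^{q-1}, t_3^{q-1} - t_1^{q-1}, ..., t_s^{q-1} - t_1^{q-1}), the ideal of S = K[t_1,...,t_s] generated by the binomials t_i^{q-1} - t_1^{q-1} for i = 2,...,s. -/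
/-!
Modulo the binomials `X i ^ (q - 1) - X z ^ (q - 1)`, the exponent of every variable `X i`,
`i ≠ z`, in a monomial can be lowered below `q - 1` by moving multiples of `q - 1` onto `X z`;
this turns a homogeneous `f` into a homogeneous `g` of the same degree with `f - g` in the
binomial ideal. If `f` vanishes on the torus, so does `g`. Setting `X z = 1` is injective on
homogeneous polynomials of a fixed degree, and it turns `g` into a polynomial of degree
`< q - 1 = #Kˣ` in every variable vanishing on `(Kˣ)^(s-1)`, hence zero by the combinatorial
Nullstellensatz. So `f` lies in the binomial ideal. Conversely, the binomials are homogeneous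
and vanish on the torus since `x ^ (q - 1) = 1` for `x ≠ 0`.
-/

theorem Finsupp.erase_injOn_degree_eq {σ : Type*} (z : σ) (d : ℕ) :
    Set.InjOn (Finsupp.erase z) {a : σ →₀ ℕ | a.degree = d} := by
  intro a ha a' ha' he
  have hdeg : ∀ b : σ →₀ ℕ, b.degree = (b.erase z).degree + b z := fun b => by
    conv_lhs => rw [← Finsupp.erase_add_single z b]
    rw [map_add, Finsupp.degree_single]
  have hz : a z = a' z := by
    have := (hdeg a).symm.trans (ha.trans ha'.symm) |>.trans (hdeg a')
    rw [he] at this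
    omega
  rw [← Finsupp.erase_add_single z a, ← Finsupp.erase_add_single z a', he, hz]

namespace MvPolynomial

variable {σ R : Type*}

theorem IsHomogeneous.eval_smul [CommSemiring R] {f : MvPolynomial σ R} {n : ℕ}
    (hf : f.IsHomogeneous n) (c : R) (x : σ → R) : eval (c • x) f = c ^ n * eval x f := by
  rw [eval_eq, eval_eq, Finset.mul_sum]
  refine Finset.sum_congr rfl fun a ha => ?_
  have hdeg : ∑ i ∈ a.support, a i = n := by
    rw [← Finsupp.degree_apply, Finsupp.degree_eq_weight_one]
    exact hf (mem_support_iff.mp ha)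
  simp only [Pi.smul_apply, smul_eq_mul, mul_pow, Finset.prod_mul_distrib,
    Finset.prod_pow_eq_pow_sum, hdeg]
  ring

variable [CommRing R]

noncomputable def binomialIdeal (R : Type*) [CommRing R] (z : σ) (m : ℕ) :
    Ideal (MvPolynomial σ R) :=
  Ideal.span {f | ∃ i, i ≠ z ∧ f = X i ^ m - X z ^ m}

theorem binomialIdeal_le_ker_eval {z : σ} {m : ℕ} {x : σ → R} (hx : ∀ i, x i ^ m = x z ^ m) :
    binomialIdeal R z m ≤ RingHom.ker (eval x) := by
  rw [binomialIdeal, Ideal.span_le]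
  rintro _ ⟨i, -, rfl⟩
  simp [hx i]

theorem exists_monomial_sub_monomial_mem_binomialIdeal (z : σ) {m : ℕ} (hm : 0 < m) (r : R)
    (a : σ →₀ ℕ) : ∃ b : σ →₀ ℕ, b.degree = a.degree ∧ (∀ i ≠ z, b i < m) ∧
      monomial a r - monomial b r ∈ binomialIdeal R z m := by
  induction h : (a.erase z).degree using Nat.strong_induction_on generalizing a with
  | _ n ih =>
  by_cases hlt : ∀ i ≠ z, a i < m
  · exact ⟨a, rfl, hlt, by simp⟩
  push Not at hlt
  obtain ⟨i, hiz, hmi⟩ := hlt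
  set a' := a - Finsupp.single i m
  have ha : a = a' + Finsupp.single i m :=
    (tsub_add_cancel_of_le (Finsupp.single_le_iff.mpr hmi)).symm
  have hmeasure : ((a' + Finsupp.single z m).erase z).degree + m = n := by
    rw [← h, ha, Finsupp.erase_add, Finsupp.erase_add, Finsupp.erase_single,
      Finsupp.erase_single_ne hiz.symm, map_add, map_add, Finsupp.degree_single, map_zero,
      add_zero]
  obtain ⟨b, hdeg, hb, hmem⟩ := ih _ (by omega) (a' + Finsupp.single z m) rfl
  refine ⟨b, by rw [hdeg, ha, map_add, map_add, Finsupp.degree_single, Finsupp.degree_single],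
    hb, ?_⟩
  have hstep : monomial a r - monomial (a' + Finsupp.single z m) r =
      monomial a' r * (X i ^ m - X z ^ m) := by
    rw [ha, mul_sub, X_pow_eq_monomial, X_pow_eq_monomial, monomial_mul, monomial_mul, mul_one]
  rw [← sub_add_sub_cancel _ (monomial (a' + Finsupp.single z m) r), hstep]
  exact add_mem (Ideal.mul_mem_left _ _ (Ideal.subset_span ⟨i, hiz, rfl⟩)) hmem

theorem IsHomogeneous.exists_sub_mem_binomialIdeal (z : σ) {m : ℕ} (hm : 0 < m)
    {f : MvPolynomial σ R} {d : ℕ} (hf : f.IsHomogeneous d) :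
    ∃ g : MvPolynomial σ R, g.IsHomogeneous d ∧ (∀ i ≠ z, g.degreeOf i < m) ∧
      f - g ∈ binomialIdeal R z m := by
  classical
  choose red hdeg hlt hmem using
    fun a => exists_monomial_sub_monomial_mem_binomialIdeal z hm (coeff a f) a
  refine ⟨∑ a ∈ f.support, monomial (red a) (coeff a f), ?_, fun i hi => ?_, ?_⟩
  · refine IsHomogeneous.sum _ _ _ fun a ha => isHomogeneous_monomial _ ?_
    rw [hdeg, Finsupp.degree_eq_weight_one]
    exact hf (mem_support_iff.mp ha)
  · rw [degreeOf_lt_iff hm]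
    intro b hb
    obtain ⟨a, -, hba⟩ := Finset.mem_biUnion.mp (support_sum hb)
    rw [Finset.mem_singleton.mp (support_monomial_subset hba)]
    exact hlt a i hi
  · have hsplit : f - ∑ a ∈ f.support, monomial (red a) (coeff a f) =
        ∑ a ∈ f.support, (monomial a (coeff a f) - monomial (red a) (coeff a f)) := by
      rw [Finset.sum_sub_distrib, support_sum_monomial_coeff]
    rw [hsplit]
    exact Ideal.sum_mem _ fun a _ => hmem a

theorem eq_zero_of_sum_monomial_eq_zero {p : MvPolynomial σ R} {e : (σ →₀ ℕ) → σ →₀ ℕ}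
    (he : Set.InjOn e p.support) (h : ∑ a ∈ p.support, monomial (e a) (coeff a p) = 0) :
    p = 0 := by
  classical
  refine eq_zero_iff.mpr fun a => ?_
  by_contra ha
  have hcoeff := congr_arg (coeff (e a)) h
  rw [coeff_sum, Finset.sum_eq_single a, coeff_monomial, if_pos rfl, coeff_zero] at hcoeff
  · exact ha hcoeff
  · intro b hb hba
    rw [coeff_monomial, if_neg (he.ne hb (mem_support_iff.mpr ha) hba)]
  · exact fun h => absurd (mem_support_iff.mpr ha) h

section Dehomogenize

variable [DecidableEq σ]

theorem aeval_update_X_one_monomial (z : σ) (u : σ →₀ ℕ) (r : R) :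
    aeval (Function.update X z 1) (monomial u r) = monomial (u.erase z) r := by
  have hfix : ∀ v : σ →₀ ℕ, v z = 0 →
      aeval (Function.update X z (1 : MvPolynomial σ R)) (monomial v r) = monomial v r := by
    intro v hv
    rw [aeval_monomial, monomial_eq, algebraMap_eq]
    congr 1
    refine Finsupp.prod_congr fun i hi => ?_
    rw [Function.update_of_ne (by rintro rfl; exact (Finsupp.mem_support_iff.mp hi) hv)]
  conv_lhs => rw [← Finsupp.erase_add_single z u, ← mul_one r, ← monomial_mul,
    ← X_pow_eq_monomial, map_mul, map_pow, aeval_X, Function.update_self, one_pow, mul_one,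
    hfix _ Finsupp.erase_same]

theorem aeval_update_X_one (z : σ) (p : MvPolynomial σ R) :
    aeval (Function.update X z 1) p = ∑ a ∈ p.support, monomial (a.erase z) (coeff a p) := by
  conv_lhs => rw [← support_sum_monomial_coeff p]
  simp only [map_sum, aeval_update_X_one_monomial]

theorem eval_aeval_update_X_one {z : σ} {x : σ → R} (hx : x z = 1) (p : MvPolynomial σ R) :
    eval x (aeval (Function.update X z 1) p) = eval x p := by
  have hpt : (fun i => aeval x (Function.update X z (1 : MvPolynomial σ R) i)) = x := by
    funext i
    by_cases hi : i = z
    · subst hi; simp [hx]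
    · simp [hi]
  rw [← coe_aeval_eq_eval, AlgHom.coe_toRingHom, comp_aeval_apply, hpt]

end Dehomogenize

theorem IsHomogeneous.eq_zero_of_forall_eval_eq_zero_of_degreeOf_lt [IsDomain R] [Finite σ]
    {g : MvPolynomial σ R} {d : ℕ} (hg : g.IsHomogeneous d) (z : σ) (S : Finset R)
    (hdeg : ∀ i ≠ z, g.degreeOf i < S.card)
    (hvan : ∀ x : σ → R, x z = 1 → (∀ i ≠ z, x i ∈ S) → eval x g = 0) : g = 0 := by
  classical
  have hinj : Set.InjOn (Finsupp.erase z) g.support :=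
    (Finsupp.erase_injOn_degree_eq z d).mono fun a ha => by
      rw [Set.mem_ofPred_eq, Finsupp.degree_eq_weight_one]
      exact hg (mem_support_iff.mp ha)
  refine eq_zero_of_sum_monomial_eq_zero hinj ?_
  rw [← aeval_update_X_one]
  refine eq_zero_of_eval_zero_at_prod_finset _ (Function.update (fun _ => S) z {1})
    (fun i => ?_) (fun x hx => ?_)
  · have hcard : 0 < (Function.update (fun _ => S) z {1} i).card := by
      by_cases hi : i = z
      · simp [hi]
      · rw [Function.update_of_ne hi]; exact (Nat.zero_le _).trans_lt (hdeg i hi)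
    rw [degreeOf_lt_iff hcard, aeval_update_X_one]
    intro b hb
    obtain ⟨a, ha, hba⟩ := Finset.mem_biUnion.mp (support_sum hb)
    rw [Finset.mem_singleton.mp (support_monomial_subset hba)]
    by_cases hi : i = z
    · subst hi; simp
    · rw [Finsupp.erase_ne hi, Function.update_of_ne hi]
      exact (monomial_le_degreeOf i ha).trans_lt (hdeg i hi)
  · have hxz : x z = 1 := by simpa using hx z
    rw [eval_aeval_update_X_one hxz]
    exact hvan x hxz fun i hi => by simpa [Function.update_of_ne hi] using hx i

end MvPolynomial

section ProjTorus

open MvPolynomial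

variable {K : Type*} [Field K] {s : ℕ}

theorem MvPolynomial.IsHomogeneous.eval_eq_zero_of_forall_mem_projTorus [NeZero s]
    {f : MvPolynomial (Fin s) K} {d : ℕ} (hf : f.IsHomogeneous d)
    (hvan : ∀ P ∈ projTorus K s, eval P.rep f = 0) {x : Fin s → K} (hx : ∀ i, x i ≠ 0) :
    eval x f = 0 := by
  have hx0 : x ≠ 0 := fun h => hx 0 (congrFun h 0)
  obtain ⟨c, hc⟩ := Projectivization.exists_smul_eq_mk_rep K x hx0
  have hmem : Projectivization.mk K x hx0 ∈ projTorus K s := fun i => by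
    rw [← hc, Pi.smul_apply, Units.smul_def, smul_eq_mul]
    exact mul_ne_zero c.ne_zero (hx i)
  have hzero := hvan _ hmem
  rw [← hc, Units.smul_def, hf.eval_smul] at hzero
  exact (mul_eq_zero.mp hzero).resolve_left (pow_ne_zero d c.ne_zero)

variable [Fintype K]

theorem binomialIdeal_le_vanishingIdeal_projTorus (z : Fin s) :
    binomialIdeal K z (Fintype.card K - 1) ≤ _root_.vanishingIdeal K (projTorus K s) := by
  rw [binomialIdeal, Ideal.span_le]
  rintro _ ⟨i, -, rfl⟩
  refine Ideal.subset_span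
    ⟨⟨_, (isHomogeneous_X_pow i _).sub (isHomogeneous_X_pow z _)⟩, fun P hP => ?_⟩
  simp [FiniteField.pow_card_sub_one_eq_one _ (hP i), FiniteField.pow_card_sub_one_eq_one _ (hP z)]

theorem vanishingIdeal_projTorus_le_binomialIdeal (z : Fin s) :
    _root_.vanishingIdeal K (projTorus K s) ≤ binomialIdeal K z (Fintype.card K - 1) := by
  classical
  have : NeZero s := NeZero.of_pos z.pos
  rw [_root_.vanishingIdeal, Ideal.span_le]
  rintro f ⟨⟨d, hf⟩, hvan⟩
  obtain ⟨g, hg, hdeg, hfg⟩ :=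
    hf.exists_sub_mem_binomialIdeal z (Nat.sub_pos_of_lt (Fintype.one_lt_card (α := K)))
  have hg0 : g = 0 := by
    refine hg.eq_zero_of_forall_eval_eq_zero_of_degreeOf_lt z (Finset.univ.erase 0)
      (by simpa [Finset.card_erase_of_mem] using hdeg) fun x hxz hx => ?_
    have hunit : ∀ i, x i ≠ 0 := fun i => by
      by_cases hi : i = z
      · rw [hi, hxz]; exact one_ne_zero
      · exact Finset.ne_of_mem_erase (hx i hi)
    have hfg0 := binomialIdeal_le_ker_eval (fun i => by
      rw [FiniteField.pow_card_sub_one_eq_one _ (hunit i),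
        FiniteField.pow_card_sub_one_eq_one _ (hunit z)]) hfg
    rwa [RingHom.mem_ker, map_sub, hf.eval_eq_zero_of_forall_mem_projTorus hvan hunit,
      zero_sub, neg_eq_zero] at hfg0
  rwa [hg0, sub_zero] at hfg

end ProjTorus

/-- The vanishing ideal of the projective torus `T ⊆ P^{s-1}` over `F_q`
is generated by the binomials `t_i^{q-1} - t_1^{q-1}`, `i = 2,…,s`. -/
theorem stmt3 {K : Type*} [Field K] [Fintype K] {q s : ℕ}
    (hq : Fintype.card K = q) (hs : 2 ≤ s) :
    vanishingIdeal K (projTorus K s) =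
      Ideal.span {f : MvPolynomial (Fin s) K |
        ∃ i : Fin s, i ≠ ⟨0, by omega⟩ ∧
          f = MvPolynomial.X i ^ (q - 1)
            - MvPolynomial.X (⟨0, by omega⟩ : Fin s) ^ (q - 1)} := by
  subst hq
  exact le_antisymm (vanishingIdeal_projTorus_le_binomialIdeal _)
    (binomialIdeal_le_vanishingIdeal_projTorus _)
end

section
/- Let X be the algebraic toric set parameterized by the monomials arising from the edges of a clutter, and let f = t_i^b - t^c be a nonzero homogeneous binomial in I(X), where b ∈ N, c ∈ N^s, and i does not lie in the support of c. Then deg(f) = b ≥ q - 1. -/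
/-- If `f = t_i^b - t^c` is a nonzero homogeneous binomial of `I(X)`,
`X` the toric set of a clutter, with `i` outside the support of `c`,
then `deg(f) = b ≥ q - 1`. -/
theorem stmt5 {K : Type*} [Field K] [Fintype K] {q n s : ℕ}
    (hq : Fintype.card K = q) (hq3 : 3 ≤ q) (hs : 2 ≤ s)
    (v : Fin s → Fin n → ℕ) (hv : IsClutter v)
    (i : Fin s) (b : ℕ) (c : Fin s → ℕ)
    (hhom : b = ∑ j, c j) (hsupp : c i = 0)
    (hne : (MvPolynomial.X i ^ b - ∏ j, MvPolynomial.X j ^ c j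
      : MvPolynomial (Fin s) K) ≠ 0)
    (hmem : (MvPolynomial.X i ^ b - ∏ j, MvPolynomial.X j ^ c j
      : MvPolynomial (Fin s) K) ∈ vanishingIdeal K (toricSet K v)) :
    q - 1 ≤ b := by
  classical
  by_cases hc : ∀ m, c m = 0
  · exfalso; apply hne
    have hb : b = 0 := by simp [hhom, hc]
    simp [hb, hc]
  push_neg at hc
  obtain ⟨k, hk⟩ := hc
  have hki : k ≠ i := fun h => hk (h ▸ hsupp)
  obtain ⟨j0, hj1, hj2⟩ := hv.2 k i hki
  set S := ∑ m, c m * v m j0 with hS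
  have hSb : S ≤ b := by
    rw [hhom]
    apply Finset.sum_le_sum
    intro m _
    calc c m * v m j0 ≤ c m * 1 := Nat.mul_le_mul_left _ (hv.1 m j0)
      _ = c m := mul_one _
  have hSpos : 0 < S := by
    have h0 : 0 < c k * v k j0 :=
      Nat.mul_pos (Nat.pos_of_ne_zero hk) (Nat.pos_of_ne_zero hj1)
    exact lt_of_lt_of_le h0
      (Finset.single_le_sum (f := fun m => c m * v m j0) (fun m _ => Nat.zero_le _) (Finset.mem_univ k))
  -- key: for all units t, t^S = 1
  have key : ∀ t : Kˣ, (t : K) ^ S = 1 := by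
    intro t
    set x : Fin n → K := fun j => if j = j0 then (t : K) else 1 with hx
    have hxne : ∀ j, x j ≠ 0 := by
      intro j; by_cases h : j = j0 <;> simp [hx, h, t.ne_zero]
    set u : Fin s → K := fun m => ∏ j, x j ^ v m j with hu
    have hum : ∀ m, u m = (t : K) ^ v m j0 := by
      intro m
      rw [hu]
      simp only
      rw [Finset.prod_eq_single j0]
      · simp [hx]
      · intro j _ hj; simp [hx, hj]
      · simp
    have hune : u ≠ 0 := by
      intro h
      have h2 := congrFun h i
      rw [hum i, hj2] at h2
      simp at h2
    have hP : Projectivization.mk K u hune ∈ toricSet K v := ⟨x, hxne, hune, rfl⟩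
    set P := Projectivization.mk K u hune with hPdef
    have heval : MvPolynomial.eval P.rep
        ((MvPolynomial.X i ^ b - ∏ j, MvPolynomial.X j ^ c j :
          MvPolynomial (Fin s) K)) = 0 := by
      have hle : vanishingIdeal K (toricSet K v) ≤
          RingHom.ker (MvPolynomial.eval P.rep) := by
        rw [vanishingIdeal, Ideal.span_le]
        intro g hg
        exact hg.2 P hP
      exact hle hmem
    have he : (P.rep i) ^ b = ∏ m, (P.rep m) ^ (c m) := by
      rw [map_sub, map_pow, map_prod, sub_eq_zero] at heval
      simpa using heval
    have hmk : Projectivization.mk K u hune =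
        Projectivization.mk K P.rep P.rep_nonzero := (Projectivization.mk_rep P).symm
    obtain ⟨a, ha⟩ := (Projectivization.mk_eq_mk_iff K u P.rep hune P.rep_nonzero).mp hmk
    have hrep : ∀ m, (a : K) * P.rep m = u m := fun m => congrFun ha m
    have hab : ((a : K)) ^ b = ∏ m, ((a : K)) ^ (c m) := by
      rw [hhom, ← Finset.prod_pow_eq_pow_sum]
    have h1 : (u i) ^ b = ∏ m, (u m) ^ (c m) := by
      calc (u i) ^ b = ((a : K) * P.rep i) ^ b := by rw [hrep i]
        _ = (a : K) ^ b * (P.rep i) ^ b := mul_pow _ _ _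
        _ = (∏ m, (a : K) ^ (c m)) * ∏ m, (P.rep m) ^ (c m) := by rw [hab, he]
        _ = ∏ m, ((a : K) * P.rep m) ^ (c m) := by
            rw [← Finset.prod_mul_distrib]
            exact Finset.prod_congr rfl fun m _ => (mul_pow _ _ _).symm
        _ = ∏ m, (u m) ^ (c m) := Finset.prod_congr rfl fun m _ => by rw [hrep m]
    have h2 : (1 : K) = ∏ m, ((t : K) ^ (v m j0)) ^ (c m) := by
      calc (1 : K) = (u i) ^ b := by rw [hum i, hj2]; simp
        _ = ∏ m, (u m) ^ (c m) := h1
        _ = ∏ m, ((t : K) ^ (v m j0)) ^ (c m) :=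
            Finset.prod_congr rfl fun m _ => by rw [hum m]
    have h3 : ∏ m, ((t : K) ^ (v m j0)) ^ (c m) = (t : K) ^ S := by
      rw [hS]
      rw [← Finset.prod_pow_eq_pow_sum]
      exact Finset.prod_congr rfl fun m _ => by rw [← pow_mul, mul_comm]
    rw [h2, h3]
  -- conclude using a generator of Kˣ
  obtain ⟨g, hg⟩ := IsCyclic.exists_generator (α := Kˣ)
  have hord : orderOf g = q - 1 := by
    rw [orderOf_eq_card_of_forall_mem_zpowers hg, Nat.card_eq_fintype_card, Fintype.card_units, hq]
  have hg1 : g ^ S = 1 := by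
    have := key g
    ext
    push_cast
    simpa using this
  have hdvd : q - 1 ∣ S := hord ▸ orderOf_dvd_of_pow_eq_one hg1
  exact le_trans (Nat.le_of_dvd hSpos hdvd) hSb
end

section
/- Let X be the algebraic toric set parameterized by the monomials arising from the edges of a clutter, and let f = t_i^b - t^c be a nonzero homogeneous binomial in I(X), where b ∈ N, c ∈ N^s, and i does not lie in the support of c. If deg(f) = q - 1, then f = t_i^{q-1} - t_j^{q-1} for some j ≠ i. -/
/-- If `f = t_i^b - t^c` is a nonzero homogeneous binomial of `I(X)`,
`X` the toric set of a clutter, with `i` outside the support of `c` and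
`deg(f) = q - 1`, then `f = t_i^{q-1} - t_j^{q-1}` for some `j ≠ i`. -/
theorem stmt6 {K : Type*} [Field K] [Fintype K] {q n s : ℕ}
    (hq : Fintype.card K = q) (hq3 : 3 ≤ q) (hs : 2 ≤ s)
    (v : Fin s → Fin n → ℕ) (hv : IsClutter v)
    (i : Fin s) (b : ℕ) (c : Fin s → ℕ)
    (hhom : b = ∑ j, c j) (hsupp : c i = 0)
    (hne : (MvPolynomial.X i ^ b - ∏ j, MvPolynomial.X j ^ c j
      : MvPolynomial (Fin s) K) ≠ 0)
    (hmem : (MvPolynomial.X i ^ b - ∏ j, MvPolynomial.X j ^ c j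
      : MvPolynomial (Fin s) K) ∈ vanishingIdeal K (toricSet K v))
    (hb : b = q - 1) :
    ∃ j : Fin s, j ≠ i ∧
      (∏ l, MvPolynomial.X l ^ c l : MvPolynomial (Fin s) K)
        = MvPolynomial.X j ^ (q - 1) := by
  
  classical
  -- abbreviations
  set f : MvPolynomial (Fin s) K :=
    MvPolynomial.X i ^ b - ∏ j, MvPolynomial.X j ^ c j with hf
  -- Step 0: f vanishes on the toric set
  have hvan : ∀ P ∈ toricSet K v, MvPolynomial.eval P.rep f = 0 := by
    intro P hP
    have hle : vanishingIdeal K (toricSet K v) ≤ RingHom.ker (MvPolynomial.eval P.rep) := by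
      rw [vanishingIdeal]
      apply Ideal.span_le.mpr
      rintro g ⟨-, hg⟩
      simpa only [SetLike.mem_coe, RingHom.mem_ker] using hg P hP
    exact hle hmem
  -- Step A: f vanishes at the actual parameter vectors
  have key : ∀ x : Fin n → K, (∀ j, x j ≠ 0) →
      (∏ j, x j ^ v i j) ^ b = ∏ k, (∏ j, x j ^ v k j) ^ c k := by
    intro x hx
    set p : Fin s → K := fun k => ∏ j, x j ^ v k j with hp
    have hpk : ∀ k, p k ≠ 0 := by
      intro k
      exact Finset.prod_ne_zero_iff.mpr fun j _ => pow_ne_zero _ (hx j)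
    have hp0 : p ≠ 0 := by
      intro h
      exact hpk i (congrFun h i)
    have hmemX : Projectivization.mk K p hp0 ∈ toricSet K v := ⟨x, hx, hp0, rfl⟩
    have hev : MvPolynomial.eval (Projectivization.mk K p hp0).rep f = 0 := hvan _ hmemX
    obtain ⟨u, hu⟩ : ∃ u : Kˣ, u • p = (Projectivization.mk K p hp0).rep := by
      rw [← Projectivization.mk_eq_mk_iff K _ _
        (Projectivization.rep_nonzero _) hp0]
      exact Projectivization.mk_rep _
    rw [← hu] at hev
    have hev' : ((u : K)) ^ b * (p i) ^ b
        - ∏ k, ((u : K) ^ c k * (p k) ^ c k) = 0 := by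
      simpa [hf, Pi.smul_apply, Units.smul_def, smul_eq_mul, mul_pow] using hev
    rw [Finset.prod_mul_distrib, Finset.prod_pow_eq_pow_sum, ← hhom, sub_eq_zero] at hev'
    have := mul_left_cancel₀ (pow_ne_zero b u.ne_zero) hev'
    exact this
  -- Step B: divisibility of the exponents
  have hd : ∀ j0 : Fin n, (q - 1) ∣ ∑ k, v k j0 * c k := by
    intro j0
    obtain ⟨g, hg⟩ := IsCyclic.exists_generator (α := Kˣ)
    have horder : orderOf g = q - 1 := by
      rw [orderOf_eq_card_of_forall_mem_zpowers hg, Nat.card_eq_fintype_card, Fintype.card_units, hq]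
    set x : Fin n → K := fun j => if j = j0 then (g : K) else 1 with hxdef
    have hx : ∀ j, x j ≠ 0 := by
      intro j
      by_cases h : j = j0 <;> simp [hxdef, h, g.ne_zero]
    have hkey := key x hx
    -- LHS is 1
    have hlhs : (∏ j, x j ^ v i j) ^ b = 1 := by
      rw [hb, ← hq]
      exact FiniteField.pow_card_sub_one_eq_one _
        (Finset.prod_ne_zero_iff.mpr fun j _ => pow_ne_zero _ (hx j))
    -- RHS equals g ^ (∑ k, v k j0 * c k)
    have hrhs : ∏ k, (∏ j, x j ^ v k j) ^ c k = (g : K) ^ ∑ k, v k j0 * c k := by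
      have h1 : ∀ k : Fin s, (∏ j, x j ^ v k j) ^ c k = ∏ j, x j ^ (v k j * c k) := by
        intro k
        rw [← Finset.prod_pow]
        exact Finset.prod_congr rfl fun j _ => by rw [← pow_mul]
      rw [Finset.prod_congr rfl fun k _ => h1 k, Finset.prod_comm]
      have h2 : ∀ j : Fin n, ∏ k, x j ^ (v k j * c k) = x j ^ ∑ k, v k j * c k := by
        intro j; rw [Finset.prod_pow_eq_pow_sum]
      rw [Finset.prod_congr rfl fun j _ => h2 j]
      have h3 : ∀ j : Fin n, x j ^ (∑ k, v k j * c k)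
          = if j = j0 then (g : K) ^ (∑ k, v k j0 * c k) else 1 := by
        intro j
        by_cases h : j = j0 <;> simp [hxdef, h]
      rw [Finset.prod_congr rfl fun j _ => h3 j, Finset.prod_ite_eq' Finset.univ j0]
      simp
    have hone : (g : K) ^ ∑ k, v k j0 * c k = 1 := by
      rw [← hrhs, ← hkey, hlhs]
    have hone' : g ^ (∑ k, v k j0 * c k) = 1 := by
      ext
      simpa using hone
    rw [← horder]
    exact orderOf_dvd_of_pow_eq_one hone'
  -- Step C: conclude
  have hsum : ∑ k, c k = q - 1 := by rw [← hhom, hb]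
  have hq1 : 2 ≤ q - 1 := by omega
  have hex : ∃ k, c k ≠ 0 := by
    by_contra h
    push_neg at h
    have : ∑ k, c k = 0 := Finset.sum_eq_zero fun k _ => h k
    omega
  obtain ⟨k, hk⟩ := hex
  have hck : ∀ l, l ≠ k → c l = 0 := by
    intro l hl
    by_contra hcl
    obtain ⟨j, hvk, hvl⟩ := hv.2 k l (fun h => hl h.symm)
    have hdj := hd j
    have hpos : 0 < ∑ m, v m j * c m := by
      have h1 : v k j * c k ≤ ∑ m, v m j * c m :=
        Finset.single_le_sum (f := fun m => v m j * c m)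
          (fun m _ => Nat.zero_le _) (Finset.mem_univ k)
      have : 0 < v k j * c k := Nat.mul_pos (Nat.pos_of_ne_zero hvk) (Nat.pos_of_ne_zero hk)
      omega
    have hlt : ∑ m, v m j * c m < ∑ m, c m := by
      apply Finset.sum_lt_sum (f := fun m => v m j * c m) (g := c)
        (fun m _ => le_trans (Nat.mul_le_mul_right _ (hv.1 m j)) (le_of_eq (one_mul _))) ?_
      exact ⟨l, Finset.mem_univ l, by simp only [hvl, zero_mul]; exact Nat.pos_of_ne_zero hcl⟩
    have := Nat.le_of_dvd hpos hdj
    omega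
  have hki : k ≠ i := by
    intro h
    exact hk (h ▸ hsupp)
  have hckval : c k = q - 1 := by
    have : ∑ l, c l = c k := Finset.sum_eq_single k (fun l _ hl => hck l hl) (by simp)
    omega
  refine ⟨k, hki, ?_⟩
  rw [Finset.prod_eq_single k (fun l _ hl => by rw [hck l hl, pow_zero]) (by simp), hckval]
end

section
/- Let T be the projective torus in P^{s-1} over the finite field K = F_q with q ≥ 3, and let f = t^{a^+} - t^{a^-} be a nonzero homogeneous binomial in the vanishing ideal I(T), where a ∈ Z^s and a^+, a^- are its positive and negative parts. Then every entry of a = a^+ - a^- is divisible by q - 1. -/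
/-- If `f = t^{a⁺} - t^{a⁻}` is a nonzero homogeneous binomial of the
vanishing ideal of the projective torus `T ⊆ P^{s-1}` over `F_q` (`q ≥ 3`), then every
entry of `a = a⁺ - a⁻` is divisible by `q - 1`. -/
theorem stmt8 {K : Type*} [Field K] [Fintype K] {q s : ℕ}
    (hq : Fintype.card K = q) (hq3 : 3 ≤ q) (hs : 2 ≤ s)
    (a : Fin s → ℤ)
    (hhom : ∑ j, (a j).toNat = ∑ j, (-(a j)).toNat)
    (hne : (∏ j, MvPolynomial.X j ^ (a j).toNat
        - ∏ j, MvPolynomial.X j ^ (-(a j)).toNat : MvPolynomial (Fin s) K) ≠ 0)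
    (hmem : (∏ j, MvPolynomial.X j ^ (a j).toNat
        - ∏ j, MvPolynomial.X j ^ (-(a j)).toNat : MvPolynomial (Fin s) K)
      ∈ vanishingIdeal K (projTorus K s)) :
    ∀ j, ((q : ℤ) - 1) ∣ a j := by
  classical
  have hs0 : 0 < s := by omega
  -- Step 1: the binomial vanishes at every point of (K*)^s.
  have key : ∀ x : Fin s → K, (∀ i, x i ≠ 0) →
      (∏ j, x j ^ (a j).toNat) = ∏ j, x j ^ (-(a j)).toNat := by
    intro x hx
    have hxne : x ≠ 0 := fun h => hx ⟨0, hs0⟩ (congrFun h _)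
    set P := Projectivization.mk K x hxne with hP
    obtain ⟨c, hc⟩ : ∃ c : Kˣ, c • x = P.rep := by
      rw [← Projectivization.mk_eq_mk_iff K _ _ P.rep_nonzero hxne]
      exact P.mk_rep
    have hPT : P ∈ projTorus K s := by
      intro i
      rw [← hc]
      simp only [Pi.smul_apply, Units.smul_def, smul_eq_mul]
      exact mul_ne_zero c.ne_zero (hx i)
    have hker : vanishingIdeal K (projTorus K s) ≤
        RingHom.ker (MvPolynomial.eval P.rep) := by
      rw [vanishingIdeal, Ideal.span_le]
      rintro f ⟨-, hf⟩
      exact hf P hPT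
    have h0 : MvPolynomial.eval P.rep
        (∏ j, MvPolynomial.X j ^ (a j).toNat
          - ∏ j, MvPolynomial.X j ^ (-(a j)).toNat : MvPolynomial (Fin s) K) = 0 :=
      hker hmem
    rw [map_sub, sub_eq_zero] at h0
    simp only [map_prod, map_pow, MvPolynomial.eval_X] at h0
    rw [← hc] at h0
    simp only [Pi.smul_apply, Units.smul_def, smul_eq_mul, mul_pow, Finset.prod_mul_distrib,
      Finset.prod_pow_eq_pow_sum, hhom] at h0
    exact mul_left_cancel₀ (pow_ne_zero _ c.ne_zero) h0
  -- Step 2: evaluate at a generator of Kˣ placed in coordinate j.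
  obtain ⟨g, hg⟩ := IsCyclic.exists_generator (α := Kˣ)
  have hord : orderOf g = q - 1 := by
    rw [orderOf_eq_card_of_forall_mem_zpowers hg, Nat.card_eq_fintype_card]
    rw [Fintype.card_units, hq]
  intro j
  classical
  set x : Fin s → K := fun i => if i = j then (g : K) else 1 with hxdef
  have hx : ∀ i, x i ≠ 0 := by
    intro i
    by_cases h : i = j <;> simp [hxdef, h, g.ne_zero]
  have h1 := key x hx
  have hp : ∀ b : Fin s → ℕ, (∏ i, x i ^ b i) = (g : K) ^ b j := by
    intro b
    rw [Finset.prod_eq_single j]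
    · simp [hxdef]
    · intro i _ hij; simp [hxdef, hij]
    · intro h; exact absurd (Finset.mem_univ j) h
  rw [hp, hp] at h1
  have h2 : g ^ ((a j).toNat : ℤ) = g ^ (((-(a j)).toNat : ℕ) : ℤ) := by
    rw [zpow_natCast, zpow_natCast]
    exact Units.ext (by push_cast [Units.val_pow_eq_pow_val]; exact h1)
  have h3 : g ^ (a j) = 1 := by
    rw [← Int.toNat_sub_toNat_neg (a j), zpow_sub, h2, mul_inv_cancel]
  have h4 : ((orderOf g : ℕ) : ℤ) ∣ a j := orderOf_dvd_iff_zpow_eq_one.mpr h3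
  rw [hord] at h4
  have : (((q - 1 : ℕ)) : ℤ) = (q : ℤ) - 1 := by omega
  rwa [this] at h4
end

section
/- Let C be a connected graph with n vertices having exactly one cycle, and suppose that cycle has odd length. Let X ⊆ P^{n-1} be the algebraic toric set parameterized by the monomials y_iy_j corresponding to the edges {y_i,y_j} of C over the finite field F_q with q ≥ 3 (such a graph has exactly n edges). Then X equals the projective torus T in P^{n-1}. -/
open scoped Classical in
lemma prod_edge_aux {M : Type*} [CommMonoid M] {n : ℕ} (x : Fin n → M)
    (z : Sym2 (Fin n)) {a b : Fin n} (hab : a ≠ b) (hz : z = s(a, b)) :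
    (∏ j, x j ^ (if j ∈ z then 1 else 0)) = x a * x b := by
  subst hz
  have h1 : ∀ j : Fin n, x j ^ (if j ∈ s(a, b) then 1 else 0)
      = if j ∈ ({a, b} : Finset (Fin n)) then x j else 1 := by
    intro j
    by_cases h : j = a ∨ j = b
    · rw [if_pos (Sym2.mem_iff.2 h), if_pos (by simpa using h), pow_one]
    · rw [if_neg (fun hc => h (Sym2.mem_iff.1 hc)), if_neg (by simpa using h), pow_zero]
  rw [Finset.prod_congr rfl fun j _ => h1 j, Finset.prod_ite_mem, Finset.univ_inter,
    Finset.prod_pair hab]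

/-- In a connected graph with an odd closed walk, if `x a * x b` equals a constant `lam`
on every edge, then `x` is constant and `x a0 * x a0 = lam`. -/
lemma ker_const_aux {n : ℕ} {A : Type*} [CommGroup A] (G : SimpleGraph (Fin n))
    (hconn : G.Connected) {a0 : Fin n} (c0 : G.Walk a0 a0) (hodd0 : Odd c0.length)
    (x : Fin n → A) (lam : A) (hx : ∀ a b : Fin n, G.Adj a b → x a * x b = lam) :
    (∀ u : Fin n, x u = x a0) ∧ x a0 * x a0 = lam := by
  have walk_lem : ∀ (uu ww : Fin n) (p : G.Walk uu ww),
      x ww = if Even p.length then x uu else lam * (x uu)⁻¹ := by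
    intro uu ww p
    induction p with
    | nil => simp
    | @cons u b w h p ih =>
      have hb : x b = lam * (x u)⁻¹ := by
        rw [← hx u b h, mul_comm (x u) (x b), mul_inv_cancel_right]
      rw [SimpleGraph.Walk.length_cons]
      by_cases hp : Even p.length
      · rw [if_neg (by simp [Nat.even_add_one, hp]), ih, if_pos hp, hb]
      · rw [if_pos (by simp [Nat.even_add_one, hp]), ih, if_neg hp, hb,
          mul_inv, inv_inv, mul_inv_cancel_left]
  have h2 : x a0 = lam * (x a0)⁻¹ := by
    have := walk_lem a0 a0 c0
    rwa [if_neg (Nat.not_even_iff_odd.2 hodd0)] at this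
  have hsq : x a0 * x a0 = lam := by
    nth_rewrite 2 [h2]
    rw [mul_comm lam, mul_inv_cancel_left]
  refine ⟨fun u => ?_, hsq⟩
  obtain ⟨p⟩ := hconn.preconnected a0 u
  have := walk_lem a0 u p
  split_ifs at this with h
  · exact this
  · rw [this, ← hsq]; exact mul_inv_cancel_right _ _


open scoped Classical in
/-- If `C` is a connected graph with `n` vertices and exactly one cycle
(equivalently, `n` edges), and that cycle is odd, then the toric set parameterized by
the edge monomials `y_iy_j` equals the projective torus in `P^{n-1}`. -/
theorem stmt12 {K : Type*} [Field K] [Fintype K] {q n : ℕ}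
    (hq : Fintype.card K = q) (hq3 : 3 ≤ q)
    (G : SimpleGraph (Fin n))
    (hconn : G.Connected)
    (hedges : G.edgeSet.ncard = n)
    (hodd : ∃ (a : Fin n) (c : G.Walk a a), c.IsCycle ∧ Odd c.length)
    (e : Fin n ≃ G.edgeSet) :
    toricSet K (fun i j => if j ∈ (e i : Sym2 (Fin n)) then 1 else 0)
      = projTorus K n := by
  obtain ⟨a0, c0, hc0, hodd0⟩ := hodd
  -- the monoid hom (vertex weights, scalar) → edge weights
  set Φ : ((Fin n → Kˣ) × Kˣ) →* (Fin n → Kˣ) :=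
    { toFun := fun p i => p.2 * ∏ j, p.1 j ^ (if j ∈ (e i : Sym2 (Fin n)) then 1 else 0)
      map_one' := by funext i; simp
      map_mul' := by
        intro p q'; funext i
        simp only [Prod.fst_mul, Prod.snd_mul, Pi.mul_apply, mul_pow,
          Finset.prod_mul_distrib]
        exact mul_mul_mul_comm _ _ _ _ } with hΦ
  -- from the per-edge-index equations to per-adjacency equations
  have index_to_adj : ∀ (p : (Fin n → Kˣ) × Kˣ) (w : Fin n → Kˣ), Φ p = w →
      ∀ (a b : Fin n) (hab : G.Adj a b),
        p.2 * (p.1 a * p.1 b) = w (e.symm ⟨s(a, b), G.mem_edgeSet.2 hab⟩) := by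
    intro p w hp a b hab
    set i : Fin n := e.symm ⟨s(a, b), G.mem_edgeSet.2 hab⟩ with hi
    have h1 : p.2 * ∏ j, p.1 j ^ (if j ∈ (e i : Sym2 (Fin n)) then 1 else 0) = w i :=
      congrFun hp i
    rwa [prod_edge_aux p.1 _ hab.ne (by rw [hi, Equiv.apply_symm_apply])] at h1
  -- kernel elements are determined by their value at a0
  have ker_det : ∀ p : (Fin n → Kˣ) × Kˣ, Φ p = 1 →
      (∀ u, p.1 u = p.1 a0) ∧ p.2 = (p.1 a0 * p.1 a0)⁻¹ := by
    intro p hp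
    have hadj : ∀ a b : Fin n, G.Adj a b → p.1 a * p.1 b = p.2⁻¹ := by
      intro a b hab
      have := index_to_adj p 1 hp a b hab
      rw [Pi.one_apply] at this
      exact eq_inv_of_mul_eq_one_right this
    obtain ⟨hcst, hsq⟩ := ker_const_aux G hconn c0 hodd0 p.1 p.2⁻¹ hadj
    exact ⟨hcst, by rw [hsq, inv_inv]⟩
  -- Φ is surjective by counting
  have hq2 : 2 ≤ q - 1 := by omega
  have hcard1 : Nat.card Kˣ = q - 1 := by
    rw [Nat.card_eq_fintype_card, Fintype.card_units, hq]
  have hcard2 : Nat.card (Fin n → Kˣ) = (q - 1) ^ n := by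
    rw [Nat.card_eq_fintype_card, Fintype.card_fun, Fintype.card_units, hq, Fintype.card_fin]
  have hcard3 : Nat.card ((Fin n → Kˣ) × Kˣ) = (q - 1) ^ n * (q - 1) := by
    rw [Nat.card_eq_fintype_card, Fintype.card_prod, ← Nat.card_eq_fintype_card,
      ← Nat.card_eq_fintype_card, hcard1, hcard2]
  have hker : Nat.card Φ.ker ≤ q - 1 := by
    have hinj : Function.Injective (fun p : Φ.ker => (p : (Fin n → Kˣ) × Kˣ).1 a0) := by
      rintro ⟨p, hp⟩ ⟨p', hp'⟩ hpp
      simp only at hpp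
      obtain ⟨hc, hl⟩ := ker_det p (MonoidHom.mem_ker.1 hp)
      obtain ⟨hc', hl'⟩ := ker_det p' (MonoidHom.mem_ker.1 hp')
      have h1 : p.1 = p'.1 := by
        funext u; rw [hc u, hc' u, hpp]
      apply Subtype.ext
      exact Prod.ext h1 (by rw [hl, hl', hpp])
    have := Nat.card_le_card_of_injective _ hinj
    rwa [hcard1] at this
  have hsurj : Function.Surjective Φ := by
    rw [← MonoidHom.range_eq_top]
    apply Subgroup.eq_top_of_card_eq
    rw [hcard2]
    have hle : Nat.card Φ.range ≤ (q - 1) ^ n := by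
      have := Nat.card_le_card_of_injective _ (Subtype.val_injective (p := (· ∈ Φ.range)))
      rwa [hcard2] at this
    have hge : (q - 1) ^ n ≤ Nat.card Φ.range := by
      have heq := Subgroup.card_eq_card_quotient_mul_card_subgroup Φ.ker
      rw [hcard3, Nat.card_congr (QuotientGroup.quotientKerEquivRange Φ).toEquiv] at heq
      have hmul : (q - 1) ^ n * (q - 1) ≤ Nat.card Φ.range * (q - 1) :=
        heq.le.trans (Nat.mul_le_mul_left _ hker)
      exact Nat.le_of_mul_le_mul_right hmul (by omega)
    omega
  -- now prove the set equality
  ext P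
  simp only [toricSet, projTorus, Set.mem_setOf_eq]
  constructor
  · rintro ⟨x, hx, hne, rfl⟩
    intro i
    obtain ⟨a, ha⟩ := (Projectivization.mk_eq_mk_iff K _ _
      (Projectivization.rep_nonzero _) hne).mp (Projectivization.mk_rep _)
    rw [← ha]
    simp only [Pi.smul_apply, Units.smul_def, smul_eq_mul]
    exact mul_ne_zero a.ne_zero
      (Finset.prod_ne_zero_iff.2 fun j _ => pow_ne_zero _ (hx j))
  · intro hP
    obtain ⟨⟨x, lam⟩, hxl⟩ := hsurj (fun i => Units.mk0 (P.rep i) (hP i))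
    have hu : ∀ i, (∏ j, (x j : K) ^ (if j ∈ (e i : Sym2 (Fin n)) then 1 else 0))
        = (lam : K)⁻¹ * P.rep i := by
      intro i
      have hi : lam * ∏ j, x j ^ (if j ∈ (e i : Sym2 (Fin n)) then 1 else 0)
          = Units.mk0 (P.rep i) (hP i) := congrFun hxl i
      have h2 := congrArg (Units.coeHom K) hi
      simp only [map_mul, map_prod, map_pow, Units.coeHom_apply, Units.val_mk0] at h2
      rw [← h2, ← mul_assoc, inv_mul_cancel₀ lam.ne_zero, one_mul]
    have hne : (fun i : Fin n => ∏ j, (x j : K) ^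
        (if j ∈ (e i : Sym2 (Fin n)) then 1 else 0)) ≠ 0 := by
      intro h0
      have := congrFun h0 a0
      rw [hu a0, Pi.zero_apply] at this
      exact mul_ne_zero (inv_ne_zero lam.ne_zero) (hP a0) this
    refine ⟨fun j => (x j : K), fun j => (x j).ne_zero, hne, ?_⟩
    conv_lhs => rw [← Projectivization.mk_rep P]
    rw [Projectivization.mk_eq_mk_iff]
    refine ⟨lam, ?_⟩
    funext i
    simp only [Pi.smul_apply, Units.smul_def, smul_eq_mul, hu i]
    rw [← mul_assoc, mul_inv_cancel₀ lam.ne_zero, one_mul]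
end

section
/- Let X be the algebraic toric set parameterized by the monomials arising from the edges of a clutter with characteristic vectors v_1,...,v_s, and let f = t^{a^+} - t^{a^-} be a nonzero homogeneous binomial in I(X) with deg(f) ≤ q - 2. Then f lies in the toric ideal I_A; equivalently, a_1^+ v_1 + ··· + a_s^+ v_s = a_1^- v_1 + ··· + a_s^- v_s in Z^n. -/
/-- If `f = t^{a⁺} - t^{a⁻}` is a nonzero homogeneous binomial of `I(X)`,
`X` the toric set of a clutter, with `deg f ≤ q - 2`, then `f` lies in the toric ideal
`I_A`; equivalently `∑ aᵢ⁺ v_i = ∑ aᵢ⁻ v_i`. -/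
theorem stmt14 {K : Type*} [Field K] [Fintype K] {q n s : ℕ}
    (hq : Fintype.card K = q) (hq3 : 3 ≤ q) (hs : 2 ≤ s)
    (v : Fin s → Fin n → ℕ) (hv : IsClutter v)
    (a : Fin s → ℤ)
    (hhom : ∑ j, (a j).toNat = ∑ j, (-(a j)).toNat)
    (hdeg : ∑ j, (a j).toNat ≤ q - 2)
    (hne : (∏ j, MvPolynomial.X j ^ (a j).toNat
        - ∏ j, MvPolynomial.X j ^ (-(a j)).toNat : MvPolynomial (Fin s) K) ≠ 0)
    (hmem : (∏ j, MvPolynomial.X j ^ (a j).toNat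
        - ∏ j, MvPolynomial.X j ^ (-(a j)).toNat : MvPolynomial (Fin s) K)
      ∈ vanishingIdeal K (toricSet K v)) :
    ((∏ j, MvPolynomial.X j ^ (a j).toNat
        - ∏ j, MvPolynomial.X j ^ (-(a j)).toNat : MvPolynomial (Fin s) K)
      ∈ Ideal.span {f : MvPolynomial (Fin s) K | ∃ b c : Fin s → ℕ,
          (∀ jj : Fin n, ∑ i, b i * v i jj = ∑ i, c i * v i jj) ∧
          f = ∏ i, MvPolynomial.X i ^ b i - ∏ i, MvPolynomial.X i ^ c i}) ∧
    ∀ jj : Fin n, ∑ i, (a i).toNat * v i jj = ∑ i, (-(a i)).toNat * v i jj := by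
  
  set p : Fin s → ℕ := fun j => (a j).toNat with hp
  set m : Fin s → ℕ := fun j => (-(a j)).toNat with hm
  -- every element of the vanishing ideal vanishes at every rep of a point of X
  have hvan : ∀ P ∈ toricSet K v, MvPolynomial.eval P.rep
      (∏ j, MvPolynomial.X j ^ p j - ∏ j, MvPolynomial.X j ^ m j : MvPolynomial (Fin s) K) = 0 := by
    intro P hP
    have hJ : vanishingIdeal K (toricSet K v) ≤ RingHom.ker (MvPolynomial.eval P.rep) := by
      rw [vanishingIdeal, Ideal.span_le]
      intro f hf
      exact hf.2 P hP
    exact hJ hmem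
  -- key: for every torus point x, the two monomial evaluations agree
  have key : ∀ x : Fin n → K, (∀ j, x j ≠ 0) →
      (∏ jj, x jj ^ ∑ i, p i * v i jj) = ∏ jj, x jj ^ ∑ i, m i * v i jj := by
    intro x hx
    set y : Fin s → K := fun i => ∏ j, x j ^ v i j with hy
    have hyne : ∀ i, y i ≠ 0 := fun i =>
      Finset.prod_ne_zero_iff.2 fun j _ => pow_ne_zero _ (hx j)
    have hy0 : y ≠ 0 := by
      intro h
      exact hyne ⟨0, by omega⟩ (congrFun h _)
    have hP : Projectivization.mk K y hy0 ∈ toricSet K v := ⟨x, hx, hy0, rfl⟩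
    obtain ⟨c, hc⟩ := Projectivization.exists_smul_eq_mk_rep K y hy0
    have heval := hvan _ hP
    rw [← hc] at heval
    have hsmul : ∀ i, ((c • y) i) = (c : K) * y i := fun i => rfl
    simp only [map_sub, map_prod, map_pow, MvPolynomial.eval_X, sub_eq_zero, hsmul,
      mul_pow] at heval
    rw [Finset.prod_mul_distrib, Finset.prod_mul_distrib,
      Finset.prod_pow_eq_pow_sum, Finset.prod_pow_eq_pow_sum, hhom] at heval
    have hcne : ((c : K)) ^ (∑ j, m j) ≠ 0 := pow_ne_zero _ c.ne_zero
    have hyy : (∏ i, y i ^ p i) = ∏ i, y i ^ m i := mul_left_cancel₀ hcne heval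
    -- rewrite both sides as products over coordinates
    have swap : ∀ w : Fin s → ℕ, (∏ i, y i ^ w i) = ∏ jj, x jj ^ ∑ i, w i * v i jj := by
      intro w
      calc (∏ i, y i ^ w i) = ∏ i, ∏ jj, x jj ^ (w i * v i jj) := by
            refine Finset.prod_congr rfl fun i _ => ?_
            rw [hy, ← Finset.prod_pow]
            exact Finset.prod_congr rfl fun jj _ => by rw [← pow_mul, mul_comm (w i)]
        _ = ∏ jj, ∏ i, x jj ^ (w i * v i jj) := Finset.prod_comm
        _ = ∏ jj, x jj ^ ∑ i, w i * v i jj := by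
            exact Finset.prod_congr rfl fun jj _ => Finset.prod_pow_eq_pow_sum _ _ _
    rw [swap p, swap m] at hyy
    exact hyy
  -- per coordinate equality using a generator of Kˣ
  have hcoord : ∀ jj : Fin n, ∑ i, p i * v i jj = ∑ i, m i * v i jj := by
    intro jj
    classical
    obtain ⟨g, hg⟩ := IsCyclic.exists_generator (α := Kˣ)
    have horder : orderOf g = q - 1 := by
      rw [orderOf_eq_card_of_forall_mem_zpowers hg, Nat.card_eq_fintype_card, Fintype.card_units, hq]
    set x : Fin n → K := fun j => if j = jj then (g : K) else 1 with hxdef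
    have hx : ∀ j, x j ≠ 0 := by
      intro j
      by_cases h : j = jj <;> simp [hxdef, h, g.ne_zero]
    have hk := key x hx
    have hprod : ∀ w : Fin n → ℕ, (∏ j, x j ^ w j) = (g : K) ^ w jj := by
      intro w
      rw [Finset.prod_eq_single jj (fun b _ hb => by simp [hxdef, hb]) (by simp)]
      simp [hxdef]
    rw [hprod, hprod] at hk
    have hu : g ^ (∑ i, p i * v i jj) = g ^ (∑ i, m i * v i jj) := Units.ext (by
      push_cast
      exact hk)
    have hmod := pow_eq_pow_iff_modEq.1 hu
    rw [horder] at hmod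
    have hbound : ∀ w : Fin s → ℕ, (∑ j, w j) ≤ q - 2 → (∑ i, w i * v i jj) < q - 1 := by
      intro w hw
      have h1 : (∑ i, w i * v i jj) ≤ ∑ i, w i :=
        Finset.sum_le_sum fun i _ => by
          have := hv.1 i jj
          calc w i * v i jj ≤ w i * 1 := Nat.mul_le_mul_left _ this
            _ = w i := mul_one _
      omega
    have h1 := hbound p hdeg
    have h2 := hbound m (hhom ▸ hdeg)
    have := hmod
    unfold Nat.ModEq at this
    rw [Nat.mod_eq_of_lt h1, Nat.mod_eq_of_lt h2] at this
    exact this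
  refine ⟨Ideal.subset_span ⟨p, m, hcoord, rfl⟩, hcoord⟩
end

section
/- Let C be a uniform clutter whose incidence matrix (the matrix with columns the characteristic vectors v_1,...,v_s) has rank n, and suppose the edge ideal I = (y^{v_1},...,y^{v_s}) ⊆ K[y_1,...,y_n] is normal, i.e., for every i ≥ 1 and every monomial y^a, if (y^a)^p ∈ I^{pi} for some p ≥ 1 then y^a ∈ I^i. Then the algebraic toric set X ⊆ P^{s-1} parameterized by the edge monomials satisfies |X| = (q-1)^{n-1}. -/
noncomputable section

/-- The edge ideal of the clutter with characteristic vectors `v_1,…,v_s`: the ideal of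
`K[y_1,…,y_n]` generated by the monomials `y^{v_1},…,y^{v_s}`. -/
def edgeIdeal (K : Type*) [Field K] {n s : ℕ} (v : Fin s → Fin n → ℕ) :
    Ideal (MvPolynomial (Fin n) K) :=
  Ideal.span (Set.range fun i : Fin s => ∏ j, MvPolynomial.X j ^ v i j)

end

open MvPolynomial

theorem prod_X_pow_eq_monomial_equivFunOnFinite {σ R : Type*} [Fintype σ] [CommSemiring R]
    (a : σ → ℕ) :
    ∏ j, (X j : MvPolynomial σ R) ^ a j = monomial (Finsupp.equivFunOnFinite.symm a) 1 := by
  rw [monomial_eq, C_1, one_mul, Finsupp.prod_fintype] <;> simp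

section EdgeIdeal

variable {K : Type*} [Field K] {n s : ℕ} {v : Fin s → Fin n → ℕ}

theorem prod_X_pow_mem_edgeIdeal_pow (N : Fin s → ℕ) :
    (∏ j, X j ^ ∑ i, N i * v i j : MvPolynomial (Fin n) K) ∈ edgeIdeal K v ^ ∑ i, N i := by
  have hprod : (∏ j, X j ^ ∑ i, N i * v i j : MvPolynomial (Fin n) K)
      = ∏ i, (∏ j, X j ^ v i j) ^ N i := by
    simp_rw [← Finset.prod_pow_eq_pow_sum, ← Finset.prod_pow, ← pow_mul, mul_comm (N _)]
    exact Finset.prod_comm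
  rw [hprod, ← Finset.prod_pow_eq_pow_sum]
  exact Ideal.prod_mem_prod fun i _ =>
    Ideal.pow_mem_pow (Ideal.subset_span (Set.mem_range_self i)) _

theorem exists_sum_le_of_prod_X_pow_mem_edgeIdeal_pow {t : ℕ} {a : Fin n → ℕ}
    (h : (∏ j, X j ^ a j : MvPolynomial (Fin n) K) ∈ edgeIdeal K v ^ t) :
    ∃ β : Fin t → Fin s, ∀ j, ∑ r, v (β r) j ≤ a j := by
  set e : Fin s → Fin n →₀ ℕ := fun i => Finsupp.equivFunOnFinite.symm (v i)
  have hgen : edgeIdeal K v = Ideal.span (Set.range fun i => monomial (e i) (1 : K)) := by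
    simp_rw [edgeIdeal, prod_X_pow_eq_monomial_equivFunOnFinite, e]
  have hpow : edgeIdeal K v ^ t ≤ Ideal.span ((monomial · (1 : K)) ''
      Set.range fun β : Fin t → Fin s => ∑ r, e (β r)) := by
    rw [hgen, Ideal.span, Submodule.span_pow]
    refine Submodule.span_mono fun p hp => ?_
    obtain ⟨f, rfl⟩ := Set.mem_pow.mp hp
    choose β hβ using fun r => (f r).2
    refine ⟨∑ r, e (β r), ⟨β, rfl⟩, ?_⟩
    simp_rw [monomial_sum_one, hβ, List.prod_ofFn]
  have hmem := hpow h
  rw [prod_X_pow_eq_monomial_equivFunOnFinite, mem_ideal_span_monomial_image] at hmem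
  obtain ⟨_, ⟨β, rfl⟩, hle⟩ :=
    hmem (Finsupp.equivFunOnFinite.symm a) (by classical simp [support_monomial])
  exact ⟨β, fun j => by simpa [e] using hle j⟩

end EdgeIdeal

section Lattice

variable {K : Type*} [Field K] {n s : ℕ} {v : Fin s → Fin n → ℕ}

def edgeDiffLattice (v : Fin s → Fin n → ℕ) : AddSubgroup (Fin n → ℤ) :=
  AddSubgroup.closure
    (Set.range fun p : Fin s × Fin s => (fun j => (v p.1 j : ℤ)) - fun j => (v p.2 j : ℤ))

def EdgeIdealIsNormal (K : Type*) [Field K] (v : Fin s → Fin n → ℕ) : Prop :=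
  ∀ i : ℕ, 1 ≤ i → ∀ a : Fin n → ℕ, ∀ p : ℕ, 1 ≤ p →
    (∏ j, X j ^ a j : MvPolynomial (Fin n) K) ^ p ∈ (edgeIdeal K v) ^ (p * i) →
    (∏ j, X j ^ a j : MvPolynomial (Fin n) K) ∈ (edgeIdeal K v) ^ i

theorem exists_pos_mul_eq_sum_mul_of_rank_eq
    (hrank : (Matrix.of fun (j : Fin n) (i : Fin s) => (v i j : ℚ)).rank = n) (w : Fin n → ℤ) :
    ∃ r : ℕ, 0 < r ∧ ∃ c : Fin s → ℤ, ∀ j, r * w j = ∑ i, c i * v i j := by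
  have htop : Submodule.span ℚ (Set.range fun i j => (v i j : ℚ)) = ⊤ := by
    apply Submodule.eq_top_of_finrank_eq
    rw [Matrix.rank_eq_finrank_span_cols] at hrank
    rw [Module.finrank_fin_fun]
    exact hrank
  obtain ⟨c, hc⟩ := (Submodule.mem_span_range_iff_exists_fun ℚ).mp
    (htop ▸ Submodule.mem_top : (fun j => (w j : ℚ)) ∈ _)
  obtain ⟨⟨b, hb⟩, hbc⟩ := IsLocalization.exist_integer_multiples_of_finite (nonZeroDivisors ℤ) c
  choose c' hc' using hbc
  refine ⟨b.natAbs, Int.natAbs_pos.mpr (nonZeroDivisors.ne_zero hb),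
    fun i => b.sign * c' i, fun j => ?_⟩
  have hcj := congrFun hc j
  simp only [Finset.sum_apply, Pi.smul_apply, smul_eq_mul] at hcj
  simp only [algebraMap_int_eq, eq_intCast, zsmul_eq_mul] at hc'
  have hbw : b * w j = ∑ i, c' i * v i j := by
    have : (b * w j : ℚ) = ∑ i, (c' i : ℚ) * v i j := by
      simp_rw [← hcj, Finset.mul_sum, hc', mul_assoc]
    exact_mod_cast this
  simp_rw [← Int.sign_mul_self_eq_natAbs, mul_assoc, hbw, Finset.mul_sum]

theorem one_le_sum_of_rank_eq
    (hrank : (Matrix.of fun (j : Fin n) (i : Fin s) => (v i j : ℚ)).rank = n) (j : Fin n) :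
    1 ≤ ∑ i, v i j := by
  obtain ⟨r, hr, c, hc⟩ := exists_pos_mul_eq_sum_mul_of_rank_eq hrank (Pi.single j 1)
  by_contra! h
  have hv : ∀ i, v i j = 0 := fun i =>
    Finset.sum_eq_zero_iff.mp (Nat.lt_one_iff.mp h) i (Finset.mem_univ i)
  exact hr.ne' (by simpa [hv] using hc j)

theorem exists_pos_mul_eq_sum_mul_of_sum_eq_zero {d : ℕ} (hdeg : ∀ i, ∑ j, v i j = d)
    (hd : 0 < d) (hrank : (Matrix.of fun (j : Fin n) (i : Fin s) => (v i j : ℚ)).rank = n)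
    {w : Fin n → ℤ} (hw : ∑ j, w j = 0) :
    ∃ r : ℕ, 0 < r ∧ ∃ c : Fin s → ℤ, ∑ i, c i = 0 ∧ ∀ j, r * w j = ∑ i, c i * v i j := by
  obtain ⟨r, hr, c, hc⟩ := exists_pos_mul_eq_sum_mul_of_rank_eq hrank w
  refine ⟨r, hr, c, ?_, hc⟩
  have : (d : ℤ) * ∑ i, c i = r * ∑ j, w j := calc
    (d : ℤ) * ∑ i, c i = ∑ i, c i * ∑ j, (v i j : ℤ) := by
      simp_rw [← Nat.cast_sum, hdeg, Finset.mul_sum, mul_comm]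
    _ = r * ∑ j, w j := by
      simp_rw [Finset.mul_sum, hc]
      exact Finset.sum_comm
  simpa [hw, hd.ne'] using this

theorem exists_eq_sum_edges_of_isNormal {d : ℕ} (hdeg : ∀ i, ∑ j, v i j = d)
    (hnormal : EdgeIdealIsNormal K v) {r m : ℕ} (hr : 0 < r) (hm : 0 < m) {a : Fin n → ℕ}
    {N : Fin s → ℕ} (hN : ∑ i, N i = r * m) (ha : ∀ j, r * a j = ∑ i, N i * v i j) :
    ∃ β : Fin m → Fin s, ∀ j, ∑ t, v (β t) j = a j := by
  have hpow : (∏ j, X j ^ a j : MvPolynomial (Fin n) K) ^ r ∈ edgeIdeal K v ^ (r * m) := by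
    simp_rw [← hN, ← Finset.prod_pow, ← pow_mul, mul_comm _ r, ha]
    exact prod_X_pow_mem_edgeIdeal_pow N
  obtain ⟨β, hβ⟩ := exists_sum_le_of_prod_X_pow_mem_edgeIdeal_pow (hnormal m hm a r hr hpow)
  have hdeg_a : ∑ j, a j = m * d := by
    refine Nat.eq_of_mul_eq_mul_left hr ?_
    simp_rw [Finset.mul_sum, ha]
    rw [Finset.sum_comm]
    simp_rw [← Finset.mul_sum, hdeg, ← Finset.sum_mul, hN, mul_assoc]
  have hdeg_β : ∑ j, ∑ t, v (β t) j = m * d := by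
    rw [Finset.sum_comm]
    simp [hdeg]
  exact ⟨β, fun j => (Finset.sum_eq_sum_iff_of_le fun j _ => hβ j).mp
    (hdeg_β.trans hdeg_a.symm) j (Finset.mem_univ j)⟩

theorem mem_edgeDiffLattice_of_eq_sum_sub {M : ℕ} (β : Fin (M * s) → Fin s) {w : Fin n → ℤ}
    (hw : ∀ j, w j = ∑ t, (v (β t) j : ℤ) - M * ∑ i, (v i j : ℤ)) :
    w ∈ edgeDiffLattice v := by
  set vZ : Fin s → Fin n → ℤ := fun i j => v i j
  -- `M` copies of every edge, indexed like the edges `β t`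
  set γ : Fin (M * s) → Fin s := fun t => (finProdFinEquiv.symm t).2
  have hγ : ∑ t, vZ (γ t) = M • ∑ i, vZ i := by
    rw [← finProdFinEquiv.sum_comp, Fintype.sum_prod_type]
    simp only [γ, Equiv.symm_apply_apply, Finset.sum_const, Finset.card_univ, Fintype.card_fin]
  have : w = ∑ t, (vZ (β t) - vZ (γ t)) := by
    rw [Finset.sum_sub_distrib, hγ]
    funext j
    simp [hw j, vZ]
  rw [this]
  exact sum_mem fun t _ => AddSubgroup.subset_closure (Set.mem_range_self (β t, γ t))

theorem mem_edgeDiffLattice_of_sum_eq_zero (hs : 0 < s) {d : ℕ} (hdeg : ∀ i, ∑ j, v i j = d)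
    (hd : 0 < d) (hrank : (Matrix.of fun (j : Fin n) (i : Fin s) => (v i j : ℚ)).rank = n)
    (hnormal : EdgeIdealIsNormal K v) {w : Fin n → ℤ} (hw : ∑ j, w j = 0) :
    w ∈ edgeDiffLattice v := by
  obtain ⟨r, hr, c, hcsum, hc⟩ := exists_pos_mul_eq_sum_mul_of_sum_eq_zero hdeg hd hrank hw
  -- shifting `w` by `M • ∑ i, v i` and `c` by `r * M` makes both nonnegative
  set M : ℕ := 1 + ∑ j, (w j).natAbs + ∑ i, (c i).natAbs
  set u : Fin n → ℕ := fun j => ∑ i, v i j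
  obtain ⟨a, ha⟩ : ∃ a : Fin n → ℕ, ∀ j, (a j : ℤ) = w j + M * u j := by
    refine ⟨fun j => (w j + M * u j).toNat, fun j => Int.toNat_of_nonneg ?_⟩
    have hwM := Finset.single_le_sum (fun j _ => Nat.zero_le _) (Finset.mem_univ j)
      (f := fun j => (w j).natAbs)
    have hMu : (M : ℤ) ≤ M * u j := le_mul_of_one_le_right (by positivity)
      (by exact_mod_cast one_le_sum_of_rank_eq hrank j)
    omega
  obtain ⟨N, hN⟩ : ∃ N : Fin s → ℕ, ∀ i, (N i : ℤ) = c i + r * M := by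
    refine ⟨fun i => (c i + r * M).toNat, fun i => Int.toNat_of_nonneg ?_⟩
    have hcM := Finset.single_le_sum (fun i _ => Nat.zero_le _) (Finset.mem_univ i)
      (f := fun i => (c i).natAbs)
    have hrM : (M : ℤ) ≤ r * M := le_mul_of_one_le_left (by positivity) (by exact_mod_cast hr)
    omega
  have hNsum : ∑ i, N i = r * (M * s) := by
    zify
    simp only [hN, Finset.sum_add_distrib, hcsum, Finset.sum_const, Finset.card_univ,
      Fintype.card_fin, Int.nsmul_eq_mul, zero_add]
    ring
  have hNa : ∀ j, r * a j = ∑ i, N i * v i j := fun j => by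
    zify
    simp [ha, hN, add_mul, Finset.sum_add_distrib, ← hc, u, mul_add, Finset.mul_sum, mul_assoc]
  obtain ⟨β, hβ⟩ := exists_eq_sum_edges_of_isNormal hdeg hnormal hr (by positivity) hNsum hNa
  refine mem_edgeDiffLattice_of_eq_sum_sub β fun j => ?_
  rw [← Nat.cast_sum, hβ j, ha j]
  push_cast [u]
  ring

end Lattice

theorem Nat.card_range_mul_card_eq_of_fibers {G α : Type*} [Group G] (D : Subgroup G) (f : G → α)
    (hf : ∀ x y, f x = f y ↔ x⁻¹ * y ∈ D) :
    Nat.card (Set.range f) * Nat.card D = Nat.card G := by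
  have hker : Setoid.ker f = QuotientGroup.leftRel D :=
    Setoid.ext fun x y => Setoid.ker_def.trans ((hf x y).trans QuotientGroup.leftRel_apply.symm)
  rw [Subgroup.card_eq_card_quotient_mul_card_subgroup D,
    ← Nat.card_congr (Setoid.quotientKerEquivRange f), hker]
  rfl

theorem Nat.card_range_constMonoidHom (ι G : Type*) [Nonempty ι] [Group G] :
    Nat.card (Pi.constMonoidHom ι G).range = Nat.card G :=
  Nat.card_range_of_injective Function.const_injective

section MonomialHom

variable {n s : ℕ} {G : Type*} [CommGroup G]

def monomialHom (v : Fin s → Fin n → ℕ) : (Fin n → G) →* (Fin s → G) where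
  toFun x i := ∏ j, x j ^ v i j
  map_one' := by ext; simp
  map_mul' x y := by ext; simp [mul_pow, Finset.prod_mul_distrib]

@[simp]
theorem monomialHom_apply (v : Fin s → Fin n → ℕ) (x : Fin n → G) (i : Fin s) :
    monomialHom v x i = ∏ j, x j ^ v i j :=
  rfl

def prodZPowHom (z : Fin n → G) : (Fin n → ℤ) →+ Additive G where
  toFun w := Additive.ofMul (∏ j, z j ^ w j)
  map_zero' := by simp
  map_add' w w' := by simp [zpow_add, Finset.prod_mul_distrib]

theorem prodZPowHom_eq_zero_iff {z : Fin n → G} {w : Fin n → ℤ} :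
    prodZPowHom z w = 0 ↔ ∏ j, z j ^ w j = 1 :=
  ofMul_eq_zero

theorem prod_zpow_eq_one_of_mem_edgeDiffLattice {v : Fin s → Fin n → ℕ} {z : Fin n → G}
    (hz : ∀ i k, monomialHom v z i = monomialHom v z k) {w : Fin n → ℤ}
    (hw : w ∈ edgeDiffLattice v) : ∏ j, z j ^ w j = 1 := by
  suffices edgeDiffLattice v ≤ (prodZPowHom z).ker from prodZPowHom_eq_zero_iff.mp (this hw)
  refine (AddSubgroup.closure_le _).mpr ?_
  rintro _ ⟨⟨i, k⟩, rfl⟩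
  rw [SetLike.mem_coe, AddMonoidHom.mem_ker, prodZPowHom_eq_zero_iff]
  simpa [zpow_sub, Finset.prod_mul_distrib, mul_inv_eq_one] using hz i k

end MonomialHom

section ToricSet

variable {n s : ℕ} {v : Fin s → Fin n → ℕ}

theorem monomialHom_mem_range_const_iff {G : Type*} [CommGroup G] [NeZero n] {d : ℕ}
    (hdeg : ∀ i, ∑ j, v i j = d) (hL : ∀ w : Fin n → ℤ, ∑ j, w j = 0 → w ∈ edgeDiffLattice v)
    {z : Fin n → G} :
    monomialHom v z ∈ (Pi.constMonoidHom (Fin s) G).range ↔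
      z ∈ (Pi.constMonoidHom (Fin n) G).range := by
  constructor
  · rintro ⟨c, hc⟩
    have hz : ∀ i k, monomialHom v z i = monomialHom v z k := fun i k => by
      rw [← hc]
      rfl
    refine ⟨z 0, funext fun j => ?_⟩
    change z 0 = z j
    have := prod_zpow_eq_one_of_mem_edgeDiffLattice hz
      (hL (Pi.single 0 1 - Pi.single j 1) (by simp [Finset.sum_sub_distrib]))
    simpa only [Pi.sub_apply, zpow_sub, Finset.prod_mul_distrib, Finset.prod_inv_distrib,
      Pi.single_apply, pow_ite, zpow_one, zpow_zero, Finset.prod_ite_eq', Finset.mem_univ,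
      if_true, mul_inv_eq_one] using this
  · rintro ⟨c, rfl⟩
    exact ⟨c ^ d, funext fun i => by simp [Finset.prod_pow_eq_pow_sum, hdeg]⟩

variable (K : Type*) [Field K] [NeZero s]

def toricPoint (v : Fin s → Fin n → ℕ) (x : Fin n → Kˣ) : Projectivization K (Fin s → K) :=
  Projectivization.mk K (fun i => ((monomialHom v x i : Kˣ) : K))
    fun h => (monomialHom v x 0).ne_zero (congrFun h 0)

theorem toricSet_eq_range_toricPoint : toricSet K v = Set.range (toricPoint K v) := by
  ext P
  constructor
  · rintro ⟨x, hx, -, rfl⟩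
    exact ⟨fun j => Units.mk0 (x j) (hx j), by simp [toricPoint]⟩
  · rintro ⟨x, rfl⟩
    refine ⟨fun j => x j, fun j => (x j).ne_zero, fun h => ?_, by simp [toricPoint]⟩
    exact (monomialHom v x 0).ne_zero (by simpa using congrFun h 0)

variable {K}

theorem toricPoint_eq_iff {x y : Fin n → Kˣ} :
    toricPoint K v x = toricPoint K v y ↔
      monomialHom v (x⁻¹ * y) ∈ (Pi.constMonoidHom (Fin s) Kˣ).range := by
  rw [toricPoint, toricPoint, Projectivization.mk_eq_mk_iff, map_mul, map_inv]
  constructor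
  · rintro ⟨a, ha⟩
    refine ⟨a⁻¹, funext fun i => ?_⟩
    have hai : a * monomialHom v y i = monomialHom v x i := Units.ext (congrFun ha i)
    rw [Pi.constMonoidHom_apply, Function.const_apply, Pi.mul_apply, Pi.inv_apply, ← hai,
      mul_inv_rev, mul_comm, mul_inv_cancel_left]
  · rintro ⟨c, hc⟩
    refine ⟨c⁻¹, funext fun i => ?_⟩
    have hci : c = (monomialHom v x i)⁻¹ * monomialHom v y i := congrFun hc i
    rw [Pi.smul_apply, Units.smul_def, smul_eq_mul, ← Units.val_mul, hci, mul_inv_rev, inv_inv,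
      mul_comm, mul_inv_cancel_left]

end ToricSet

theorem stmt16_general {K : Type*} [Field K] [Fintype K] {q n s : ℕ}
    (hq : Fintype.card K = q) (hs : 2 ≤ s)
    (v : Fin s → Fin n → ℕ) (hv : IsClutter v)
    (hunif : ∀ i k : Fin s, ∑ j, v i j = ∑ j, v k j)
    (hrank : (Matrix.of fun (j : Fin n) (i : Fin s) => ((v i j : ℚ))).rank = n)
    (hnormal : ∀ i : ℕ, 1 ≤ i → ∀ a : Fin n → ℕ, ∀ p : ℕ, 1 ≤ p →
      (∏ j, MvPolynomial.X j ^ a j : MvPolynomial (Fin n) K) ^ p ∈ (edgeIdeal K v) ^ (p * i) →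
      (∏ j, MvPolynomial.X j ^ a j : MvPolynomial (Fin n) K) ∈ (edgeIdeal K v) ^ i) :
    (toricSet K v).ncard = (q - 1) ^ (n - 1) := by
  have : NeZero s := ⟨by omega⟩
  obtain ⟨j₀, hj₀, -⟩ := hv.2 0 1 (by simp [Fin.ext_iff, Nat.mod_eq_of_lt hs])
  have : NeZero n := ⟨j₀.pos.ne'⟩
  have hdeg : ∀ i, ∑ j, v i j = ∑ j, v 0 j := fun i => hunif i 0
  have hd : 0 < ∑ j, v 0 j := (Nat.pos_of_ne_zero hj₀).trans_le
    (Finset.single_le_sum (fun j _ => Nat.zero_le _) (Finset.mem_univ j₀))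
  have hL : ∀ w : Fin n → ℤ, ∑ j, w j = 0 → w ∈ edgeDiffLattice v := fun w hw =>
    mem_edgeDiffLattice_of_sum_eq_zero (by omega) hdeg hd hrank hnormal hw
  have hcard := Nat.card_range_mul_card_eq_of_fibers _ (toricPoint K v) fun x y =>
    toricPoint_eq_iff.trans (monomialHom_mem_range_const_iff hdeg hL)
  have hq1 : 0 < q - 1 := by have := Fintype.one_lt_card (α := K); omega
  have hKu : Nat.card Kˣ = q - 1 := by rw [Nat.card_units, Nat.card_eq_fintype_card, hq]
  rw [Nat.card_pi, Finset.prod_const, Finset.card_univ, Fintype.card_fin,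
    Nat.card_range_constMonoidHom, hKu] at hcard
  rw [toricSet_eq_range_toricPoint, ← Nat.card_coe_set_eq]
  refine Nat.eq_of_mul_eq_mul_right hq1 (hcard.trans ?_)
  rw [← pow_succ, Nat.sub_add_cancel (NeZero.one_le)]

/-- For a uniform clutter whose incidence matrix has rank `n` and whose
edge ideal is normal, the toric set `X ⊆ P^{s-1}` satisfies `|X| = (q-1)^{n-1}`. -/
theorem stmt16 {K : Type*} [Field K] [Fintype K] {q n s : ℕ}
    (hq : Fintype.card K = q) (hq3 : 3 ≤ q) (hs : 2 ≤ s)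
    (v : Fin s → Fin n → ℕ) (hv : IsClutter v)
    (hunif : ∀ i k : Fin s, ∑ j, v i j = ∑ j, v k j)
    (hrank : (Matrix.of fun (j : Fin n) (i : Fin s) => ((v i j : ℚ))).rank = n)
    (hnormal : ∀ i : ℕ, 1 ≤ i → ∀ a : Fin n → ℕ, ∀ p : ℕ, 1 ≤ p →
      (∏ j, MvPolynomial.X j ^ a j : MvPolynomial (Fin n) K) ^ p ∈ (edgeIdeal K v) ^ (p * i) →
      (∏ j, MvPolynomial.X j ^ a j : MvPolynomial (Fin n) K) ∈ (edgeIdeal K v) ^ i) :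
    (toricSet K v).ncard = (q - 1) ^ (n - 1) :=
  stmt16_general hq hs v hv hunif hrank hnormal
end
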